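/- For integers n ≥ 1, d ≥ 1, μ ≥ 2, the coefficient of h₁^{d-1}···h_n^{d-1} in the product ∏_{i=1}^{n} (∑_{k=1}^{d} h_{i+1}^{k-1}(μ·h_i)^{d-k}) (indices mod n, so h_{n+1} = h₁) equals ∑_{k=1}^{d} μ^{n(d-k)} = (μ^{nd} - 1)/(μ^n - 1) when μ > 1. -/

import Mathlib

open MvPolynomial

private lemma prod_monomial' {ι σ R : Type*} [CommSemiring R] (s : Finset ι)
    (f : ι → (σ →₀ ℕ)) (c : ι → R) :
    ∏ i ∈ s, monomial (f i) (c i) = monomial (∑ i ∈ s, f i) (∏ i ∈ s, c i) := by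
  induction s using Finset.cons_induction with
  | empty => simp
  | cons a s ha ih =>
    rw [Finset.prod_cons, Finset.sum_cons, Finset.prod_cons, ih, monomial_mul]

private lemma sum_single_apply {ι : Type*} [Fintype ι] [DecidableEq ι] (a : ι → ℕ) (j : ι) :
    (∑ i, Finsupp.single i (a i)) j = a j := by
  rw [Finsupp.finset_sum_apply]
  simp [Finsupp.single_apply]

/-- The count of period-`n` orbits: the coefficient of `h₁^{d-1}⋯h_n^{d-1}` in
`∏_{i=1}^{n} (∑_{k=1}^{d} h_{i+1}^{k-1}(μ h_i)^{d-k})` (indices mod `n`)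
equals `∑_{k=1}^{d} μ^{n(d-k)} = (μ^{nd} - 1)/(μ^n - 1)`. -/
theorem stmt_2 (n d μ : ℕ) (hn : 1 ≤ n) (hd : 1 ≤ d) (hμ : 2 ≤ μ) :
    (MvPolynomial.coeff (∑ i : Fin n, Finsupp.single i (d - 1))
      (∏ i : Fin n, ∑ k ∈ Finset.Icc 1 d,
        (X (⟨((i : ℕ) + 1) % n, Nat.mod_lt _ hn⟩ : Fin n) : MvPolynomial (Fin n) ℤ) ^ (k - 1) *
          (C (μ : ℤ) * X i) ^ (d - k))
      = ∑ k ∈ Finset.Icc 1 d, (μ : ℤ) ^ (n * (d - k))) ∧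
    ((∑ k ∈ Finset.Icc 1 d, (μ : ℤ) ^ (n * (d - k)))
      = ((μ : ℤ) ^ (n * d) - 1) / ((μ : ℤ) ^ n - 1)) := by
  haveI : NeZero n := ⟨by omega⟩
  classical
  constructor
  · -- main coefficient computation
    -- replace the index by `i + 1` in `Fin n`
    have hidx : ∀ i : Fin n, (⟨((i : ℕ) + 1) % n, Nat.mod_lt _ hn⟩ : Fin n) = i + 1 := by
      intro i
      apply Fin.ext
      simp only [Fin.add_def, Fin.val_one']
      conv_lhs => rw [Nat.add_mod]
      conv_rhs => rw [Nat.add_mod, Nat.mod_mod_of_dvd _ dvd_rfl]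
    -- each summand is a monomial
    have hterm : ∀ (i : Fin n) (k : ℕ),
        (X (⟨((i : ℕ) + 1) % n, Nat.mod_lt _ hn⟩ : Fin n) : MvPolynomial (Fin n) ℤ) ^ (k - 1) *
          (C (μ : ℤ) * X i) ^ (d - k)
        = monomial (Finsupp.single (i + 1) (k - 1) + Finsupp.single i (d - k))
            ((μ : ℤ) ^ (d - k)) := by
      intro i k
      rw [hidx i, mul_pow, ← C_pow, X_pow_eq_monomial, X_pow_eq_monomial,
        C_mul_monomial, monomial_mul]
      simp
    simp only [hterm]
    rw [Finset.prod_univ_sum]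
    simp only [prod_monomial', coeff_sum, coeff_monomial]
    -- the condition on exponents forces the choice to be constant
    have key : ∀ p : Fin n → ℕ, (∀ i, p i ∈ Finset.Icc 1 d) →
        ((∑ i : Fin n, (Finsupp.single (i + 1) (p i - 1) + Finsupp.single i (d - p i)))
          = ∑ i : Fin n, Finsupp.single i (d - 1) ↔ ∀ i, p i = p 0) := by
      intro p hp
      have hrw : (∑ i : Fin n, (Finsupp.single (i + 1) (p i - 1) + Finsupp.single i (d - p i)))
          = ∑ j : Fin n, Finsupp.single j ((p (j - 1) - 1) + (d - p j)) := by
        rw [Finset.sum_add_distrib]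
        have h1 : (∑ i : Fin n, Finsupp.single (i + 1) (p i - 1))
            = ∑ j : Fin n, Finsupp.single j (p (j - 1) - 1) := by
          rw [← Equiv.sum_comp (Equiv.addRight (1 : Fin n))
            (fun j => Finsupp.single j (p (j - 1) - 1))]
          apply Finset.sum_congr rfl
          intro i _
          simp [Equiv.addRight]
        rw [h1, ← Finset.sum_add_distrib]
        apply Finset.sum_congr rfl
        intro j _
        rw [Finsupp.single_add]
      rw [hrw]
      constructor
      · intro h
        have happ : ∀ j : Fin n, (p (j - 1) - 1) + (d - p j) = d - 1 := by
          intro j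
          have := DFunLike.congr_fun h j
          rwa [sum_single_apply, sum_single_apply] at this
        have hstep : ∀ j : Fin n, p (j - 1) = p j := by
          intro j
          have h1 := happ j
          have h2 := (Finset.mem_Icc.mp (hp (j - 1)))
          have h3 := (Finset.mem_Icc.mp (hp j))
          omega
        have hstep' : ∀ j : Fin n, p (j + 1) = p j := by
          intro j
          have := (hstep (j + 1)).symm
          simpa using this
        open Fin.NatCast in
        have hnat : ∀ m : ℕ, p ((m : Fin n)) = p 0 := by
          intro m
          induction m with
          | zero => simp
          | succ m ih =>
            have : ((m + 1 : ℕ) : Fin n) = (m : Fin n) + 1 := by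
              push_cast; ring
            rw [this, hstep', ih]
        intro i
        have := hnat (i : ℕ)
        rwa [Fin.cast_val_eq_self] at this
      · intro h
        apply Finset.sum_congr rfl
        intro j _
        have h1 := h j
        have h2 := h (j - 1)
        have h3 := (Finset.mem_Icc.mp (hp 0))
        rw [h1, h2]
        congr 1
        omega
    -- now compute the sum over functions
    rw [← Finset.sum_filter]
    refine Finset.sum_nbij' (fun p => p 0) (fun k => fun _ => k) ?_ ?_ ?_ ?_ ?_
    · intro p hp
      rw [Finset.mem_filter, Fintype.mem_piFinset] at hp
      exact hp.1 0
    · intro k hk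
      rw [Finset.mem_filter, Fintype.mem_piFinset]
      refine ⟨fun _ => hk, ?_⟩
      exact (key (fun _ => k) (fun _ => hk)).mpr (fun _ => rfl)
    · intro p hp
      rw [Finset.mem_filter, Fintype.mem_piFinset] at hp
      funext i
      exact ((key p hp.1).mp hp.2 i).symm
    · intro k hk
      rfl
    · intro p hp
      rw [Finset.mem_filter, Fintype.mem_piFinset] at hp
      have hconst := (key p hp.1).mp hp.2
      calc (∏ i : Fin n, (μ : ℤ) ^ (d - p i)) = ∏ _i : Fin n, (μ : ℤ) ^ (d - p 0) := by
            exact Finset.prod_congr rfl (fun i _ => by rw [hconst i])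
        _ = ((μ : ℤ) ^ (d - p 0)) ^ n := by
            rw [Finset.prod_const, Finset.card_univ, Fintype.card_fin]
        _ = (μ : ℤ) ^ (n * (d - p 0)) := by rw [← pow_mul, mul_comm]
  · -- geometric series identity
    have h1 : (1 : ℤ) < (μ : ℤ) ^ n := one_lt_pow₀ (by exact_mod_cast hμ) (by omega)
    have hx : (μ : ℤ) ^ n - 1 ≠ 0 := by omega
    have hre : (∑ k ∈ Finset.Icc 1 d, (μ : ℤ) ^ (n * (d - k)))
        = ∑ j ∈ Finset.range d, ((μ : ℤ) ^ n) ^ j := by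
      apply Finset.sum_nbij' (fun k => d - k) (fun j => d - j)
      · intro k hk; simp at hk ⊢; omega
      · intro j hj; simp at hj ⊢; omega
      · intro k hk; simp at hk; omega
      · intro j hj; simp at hj; omega
      · intro k hk; rw [← pow_mul]
    rw [hre, pow_mul, ← geom_sum_mul ((μ : ℤ) ^ n) d, Int.mul_ediv_cancel _ hx]
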